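/- arXiv:2008.10466 — 3 statements merged into one kernel-verified Lean document; each statement's English description precedes it below -/
import Mathlib

section
/- Define G(U,V) = ‖U‖_{2,0} + ‖V‖_{2,0} for (U,V) ∈ ℝ^{n×r} × ℝ^{m×r}. Then for every (U,V) and every direction (S,W) ∈ ℝ^{n×r} × ℝ^{m×r}, the subderivative dG(U,V)(S,W) = 0 if J_S ⊆ J_U and J_W ⊆ J_V, and dG(U,V)(S,W) = +∞ otherwise. -/
/-!
Each column of a matrix being nonzero is an open condition, so the set `J_A` of nonzero columns
can only grow under small perturbations: `G` has a local minimum everywhere, and the difference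
quotients in the liminf are eventually nonnegative. If `J_S ⊆ J_U` and `J_W ⊆ J_V`, then
`J_{U + tS} = J_U` and `J_{V + tW} = J_V` for small `t`, so the quotient vanishes along the ray
and the liminf is `0`. Otherwise some column `j` vanishes in `U` (say) but not in `S`; then column
`j` of `U + tS'` is `t` times that of `S'`, nonzero for `t > 0` and `S'` near `S`, so `G` jumps by
at least `1` and the quotient is at least `1 / t → ∞`.
-/

open Filter Topology

/-- The column `ℓ_{2,0}`-norm: the number of nonzero columns. -/
noncomputable def l20 {α β : Type*} [Fintype α] [Fintype β] (A : Matrix α β ℝ) : ℕ :=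
  {j : β | (fun i => A i j) ≠ 0}.ncard

/-- The subderivative `dh(x)(w) = liminf_{t↓0, w'→w} (h(x + t w') − h(x))/t`,
valued in `[−∞, +∞]`. -/
noncomputable def subderiv {E : Type*} [AddCommGroup E] [Module ℝ E] [TopologicalSpace E]
    (h : E → ℝ) (x w : E) : EReal :=
  Filter.liminf (fun p : ℝ × E => (((h (x + p.1 • p.2) - h x) / p.1 : ℝ) : EReal))
    ((𝓝[>] (0 : ℝ)) ×ˢ 𝓝 w)

section Subderiv

variable {E : Type*} [AddCommGroup E] [Module ℝ E] [TopologicalSpace E] {h : E → ℝ} {x w : E}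

theorem subderiv_eq_zero_of_eventually
    (hle : ∀ᶠ q : ℝ × E in 𝓝[>] 0 ×ˢ 𝓝 w, h x ≤ h (x + q.1 • q.2))
    (heq : ∀ᶠ t in 𝓝[>] (0 : ℝ), h (x + t • w) = h x) :
    subderiv h x w = 0 := by
  have hpos : ∀ᶠ q : ℝ × E in 𝓝[>] 0 ×ˢ 𝓝 w, 0 < q.1 :=
    tendsto_fst.eventually self_mem_nhdsWithin
  have hray : Tendsto (fun t : ℝ => (t, w)) (𝓝[>] 0) (𝓝[>] 0 ×ˢ 𝓝 w) :=
    tendsto_id.prodMk tendsto_const_nhds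
  refine le_antisymm (liminf_le_of_frequently_le ?_) (le_liminf_of_le (by isBoundedDefault) ?_)
  · refine hray.frequently (heq.mono fun t ht => ?_).frequently
    simp [ht]
  · filter_upwards [hle, hpos] with q hq hq₁
    exact EReal.coe_nonneg.mpr (div_nonneg (sub_nonneg.mpr hq) hq₁.le)

theorem subderiv_eq_top_of_eventually {c : ℝ} (hc : 0 < c)
    (hle : ∀ᶠ q : ℝ × E in 𝓝[>] 0 ×ˢ 𝓝 w, h x + c ≤ h (x + q.1 • q.2)) :
    subderiv h x w = ⊤ := by
  have hquot : Tendsto (fun q : ℝ × E => (h (x + q.1 • q.2) - h x) / q.1)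
      (𝓝[>] 0 ×ˢ 𝓝 w) atTop := by
    refine tendsto_atTop_mono' _ ?_
      ((tendsto_inv_nhdsGT_zero.comp tendsto_fst).const_mul_atTop hc)
    filter_upwards [hle, tendsto_fst.eventually self_mem_nhdsWithin] with q hq hq₁
    rw [Function.comp_apply, ← div_eq_mul_inv]
    exact div_le_div_of_nonneg_right (by linarith) (le_of_lt hq₁)
  exact (EReal.tendsto_coe_atTop.comp hquot).liminf_eq

theorem tendsto_add_smul_nhdsGT [ContinuousAdd E] [ContinuousSMul ℝ E] (x w : E) :
    Tendsto (fun q : ℝ × E => x + q.1 • q.2) (𝓝[>] 0 ×ˢ 𝓝 w) (𝓝 x) := by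
  have hcont : Tendsto (fun q : ℝ × E => x + q.1 • q.2) (𝓝 0 ×ˢ 𝓝 w) (𝓝 (x + (0 : ℝ) • w)) := by
    rw [← nhds_prod_eq]
    exact (continuous_const.add (continuous_fst.smul continuous_snd)).tendsto _
  simpa using hcont.mono_left (prod_mono nhdsWithin_le_nhds le_rfl)

end Subderiv

section Prod

variable {E F : Type*} [AddCommGroup E] [Module ℝ E] [TopologicalSpace E]
  [AddCommGroup F] [Module ℝ F] [TopologicalSpace F]

theorem eventually_add_le_add_smul_prod (h₁ : E → ℝ) (h₂ : F → ℝ) {x₁ w₁ : E} {x₂ w₂ : F}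
    {c₁ c₂ : ℝ}
    (hle₁ : ∀ᶠ q : ℝ × E in 𝓝[>] 0 ×ˢ 𝓝 w₁, h₁ x₁ + c₁ ≤ h₁ (x₁ + q.1 • q.2))
    (hle₂ : ∀ᶠ q : ℝ × F in 𝓝[>] 0 ×ˢ 𝓝 w₂, h₂ x₂ + c₂ ≤ h₂ (x₂ + q.1 • q.2)) :
    ∀ᶠ q : ℝ × (E × F) in 𝓝[>] 0 ×ˢ 𝓝 (w₁, w₂),
      h₁ x₁ + h₂ x₂ + (c₁ + c₂) ≤ h₁ (x₁ + q.1 • q.2.1) + h₂ (x₂ + q.1 • q.2.2) := by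
  have hfst : Tendsto (fun q : ℝ × (E × F) => (q.1, q.2.1)) (𝓝[>] 0 ×ˢ 𝓝 (w₁, w₂))
      (𝓝[>] 0 ×ˢ 𝓝 w₁) := tendsto_fst.prodMk tendsto_snd.fst_nhds
  have hsnd : Tendsto (fun q : ℝ × (E × F) => (q.1, q.2.2)) (𝓝[>] 0 ×ˢ 𝓝 (w₁, w₂))
      (𝓝[>] 0 ×ˢ 𝓝 w₂) := tendsto_fst.prodMk tendsto_snd.snd_nhds
  filter_upwards [hfst.eventually hle₁, hsnd.eventually hle₂] with q hq₁ hq₂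
  linarith

end Prod

section ColSupport

open scoped Matrix

variable {α β : Type*}

def colSupport (A : Matrix α β ℝ) : Set β := {j | Aᵀ j ≠ 0}

theorem l20_eq_ncard_colSupport [Fintype α] [Fintype β] (A : Matrix α β ℝ) :
    l20 A = (colSupport A).ncard := rfl

theorem isOpen_setOf_mem_colSupport (j : β) : IsOpen {A : Matrix α β ℝ | j ∈ colSupport A} :=
  isOpen_ne.preimage ((continuous_apply j).comp continuous_id.matrix_transpose)

theorem colSupport_add_smul_subset (A B : Matrix α β ℝ) (t : ℝ) :
    colSupport (A + t • B) ⊆ colSupport A ∪ colSupport B := by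
  intro j hj
  rw [Set.mem_union, or_iff_not_imp_left]
  intro hA hB
  apply hj
  change Aᵀ j + t • Bᵀ j = 0
  rw [not_not.mp hA, hB, smul_zero, add_zero]

theorem eventually_colSupport_subset [Finite β] (A : Matrix α β ℝ) :
    ∀ᶠ B in 𝓝 A, colSupport A ⊆ colSupport B :=
  (colSupport A).toFinite.eventually_all.mpr fun _ hj =>
    (isOpen_setOf_mem_colSupport _).eventually_mem hj

end ColSupport

section L20

open scoped Matrix

variable {α β : Type*} [Fintype α] [Fintype β]

theorem isLocalMin_l20 (A : Matrix α β ℝ) : IsLocalMin (l20 : Matrix α β ℝ → ℕ) A :=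
  (eventually_colSupport_subset A).mono fun _ hB => Set.ncard_le_ncard hB

theorem eventually_l20_le_l20_add_smul (U S : Matrix α β ℝ) :
    ∀ᶠ q : ℝ × Matrix α β ℝ in 𝓝[>] 0 ×ˢ 𝓝 S, (l20 U : ℝ) ≤ l20 (U + q.1 • q.2) :=
  (tendsto_add_smul_nhdsGT U S).eventually
    ((isLocalMin_l20 U).mono fun _ h => Nat.cast_le.mpr h)

theorem eventually_l20_add_smul_eq {U S : Matrix α β ℝ} (h : colSupport S ⊆ colSupport U) :
    ∀ᶠ t in 𝓝 (0 : ℝ), l20 (U + t • S) = l20 U := by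
  have hcont : Tendsto (fun t : ℝ => U + t • S) (𝓝 0) (𝓝 U) :=
    (by fun_prop : Continuous fun t : ℝ => U + t • S).tendsto' 0 U (by simp)
  filter_upwards [hcont.eventually (isLocalMin_l20 U)] with t ht
  refine le_antisymm ?_ ht
  calc l20 (U + t • S) ≤ (colSupport U ∪ colSupport S).ncard :=
        Set.ncard_le_ncard (colSupport_add_smul_subset U S t)
    _ = l20 U := by rw [Set.union_eq_left.mpr h, l20_eq_ncard_colSupport]

theorem eventually_l20_add_one_le_l20_add_smul {U S : Matrix α β ℝ} {j : β}
    (hS : j ∈ colSupport S) (hU : j ∉ colSupport U) :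
    ∀ᶠ q : ℝ × Matrix α β ℝ in 𝓝[>] 0 ×ˢ 𝓝 S, (l20 U : ℝ) + 1 ≤ l20 (U + q.1 • q.2) := by
  filter_upwards [(tendsto_add_smul_nhdsGT U S).eventually (eventually_colSupport_subset U),
    tendsto_fst.eventually self_mem_nhdsWithin,
    tendsto_snd.eventually ((isOpen_setOf_mem_colSupport j).eventually_mem hS)]
    with q hsub hq₁ hq₂
  have hj : j ∈ colSupport (U + q.1 • q.2) := by
    change Uᵀ j + q.1 • q.2ᵀ j ≠ 0
    rw [not_not.mp hU, zero_add]
    exact smul_ne_zero hq₁.ne' hq₂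
  exact_mod_cast Set.ncard_lt_ncard ((Set.ssubset_iff_of_subset hsub).mpr ⟨j, hj, hU⟩)

end L20

/-- for `G(U,V) = ‖U‖_{2,0} + ‖V‖_{2,0}`, one has `dG(U,V)(S,W) = 0` if
`J_S ⊆ J_U` and `J_W ⊆ J_V`, and `dG(U,V)(S,W) = +∞` otherwise. -/
theorem subderiv_l20_pair {n m r : ℕ} (U S : Matrix (Fin n) (Fin r) ℝ)
    (V W : Matrix (Fin m) (Fin r) ℝ) :
    (((∀ i : Fin r, (fun k => S k i) ≠ 0 → (fun k => U k i) ≠ 0) ∧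
        (∀ i : Fin r, (fun k => W k i) ≠ 0 → (fun k => V k i) ≠ 0)) →
      subderiv (fun p : Matrix (Fin n) (Fin r) ℝ × Matrix (Fin m) (Fin r) ℝ =>
          ((l20 p.1 : ℝ) + (l20 p.2 : ℝ))) (U, V) (S, W) = 0) ∧
    (¬ ((∀ i : Fin r, (fun k => S k i) ≠ 0 → (fun k => U k i) ≠ 0) ∧
        (∀ i : Fin r, (fun k => W k i) ≠ 0 → (fun k => V k i) ≠ 0)) →
      subderiv (fun p : Matrix (Fin n) (Fin r) ℝ × Matrix (Fin m) (Fin r) ℝ =>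
          ((l20 p.1 : ℝ) + (l20 p.2 : ℝ))) (U, V) (S, W) = ⊤) := by
  change (colSupport S ⊆ colSupport U ∧ colSupport W ⊆ colSupport V → _) ∧
    (¬ (colSupport S ⊆ colSupport U ∧ colSupport W ⊆ colSupport V) → _)
  have hU := eventually_l20_le_l20_add_smul U S
  have hV := eventually_l20_le_l20_add_smul V W
  refine ⟨fun ⟨hSU, hWV⟩ => ?_, fun hJ => ?_⟩
  · refine subderiv_eq_zero_of_eventually ?_ ?_
    · simpa using eventually_add_le_add_smul_prod (l20 · : _ → ℝ) (l20 · : _ → ℝ)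
        (c₁ := 0) (c₂ := 0) (by simpa using hU) (by simpa using hV)
    · filter_upwards [nhdsWithin_le_nhds (eventually_l20_add_smul_eq hSU),
        nhdsWithin_le_nhds (eventually_l20_add_smul_eq hWV)] with t htU htV
      simp [htU, htV]
  · refine subderiv_eq_top_of_eventually one_pos ?_
    rcases not_and_or.mp hJ with hSU | hWV
    · obtain ⟨j, hjS, hjU⟩ := Set.not_subset.mp hSU
      simpa using eventually_add_le_add_smul_prod (l20 · : _ → ℝ) (l20 · : _ → ℝ) (c₂ := 0)
        (eventually_l20_add_one_le_l20_add_smul hjS hjU) (by simpa using hV)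
    · obtain ⟨j, hjW, hjV⟩ := Set.not_subset.mp hWV
      simpa using eventually_add_le_add_smul_prod (l20 · : _ → ℝ) (l20 · : _ → ℝ)
        (c₁ := 0) (by simpa using hU) (eventually_l20_add_one_le_l20_add_smul hjW hjV)
end

section
/- Let f : ℝ^{n×m} → ℝ be continuously differentiable and μ > 0. For (Ū, V̄) ∈ ℝ^{n×r} × ℝ^{m×r}, the following are equivalent: (a) ∇f(Ū V̄ᵀ) V̄_j + μ Ū_j = 0 for every column index j with Ū_j ≠ 0 and (∇f(Ū V̄ᵀ))ᵀ Ū_j + μ V̄_j = 0 for every column index j with V̄_j ≠ 0; (b) ∇f(Ū V̄ᵀ) V̄ + μ Ū = 0 and (∇f(Ū V̄ᵀ))ᵀ Ū + μ V̄ = 0, i.e. the gradient of F_μ(U,V) = f(UVᵀ) + (μ/2)(‖U‖_F² + ‖V‖_F²) vanishes at (Ū, V̄). -/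
/-!
A zero column `Ū_j` forces the `j`-th column of `(∇f)ᵀŪ` to vanish, so when `V̄_j ≠ 0` the
condition `(∇f)ᵀŪ_j + μV̄_j = 0` would give `μV̄_j = 0`, i.e. `V̄_j = 0` since `μ ≠ 0`.
Hence `Ū` and `V̄` have the same zero columns, and on such a column both equations of (b)
read `0 + 0 = 0`.
-/

open Filter Topology Matrix

attribute [local instance] Matrix.frobeniusSeminormedAddCommGroup
  Matrix.frobeniusNormedAddCommGroup Matrix.frobeniusNormedSpace

/-- The Frobenius (trace) inner product `⟨A,B⟩ = trace(AᵀB) = ∑ᵢⱼ Aᵢⱼ Bᵢⱼ` on matrices. -/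
noncomputable def frobInner {α β : Type*} [Fintype α] [Fintype β] (A B : Matrix α β ℝ) : ℝ :=
  ∑ i, ∑ j, A i j * B i j

namespace Matrix

variable {α β ι R : Type*} [Fintype β] [Semiring R]
  {A : Matrix α β R} {B : Matrix β ι R} {C : Matrix α ι R} {mu : R}

theorem mul_apply_eq_zero_of_col_eq_zero {j : ι} (hB : Bᵀ j = 0) (i : α) :
    (A * B) i j = 0 := by
  have hBj : ∀ k, B k j = 0 := fun k => congrFun hB k
  simp [mul_apply, hBj]

theorem col_eq_zero_of_col_eq_zero_of_mul_add_mul_eq_zero [NoZeroDivisors R] (hmu : mu ≠ 0)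
    (hC : ∀ j, Cᵀ j ≠ 0 → ∀ i, (A * B) i j + mu * C i j = 0) {j : ι} (hB : Bᵀ j = 0) :
    Cᵀ j = 0 := by
  by_contra hCj
  refine hCj (funext fun i => ?_)
  have h := hC j hCj i
  rw [mul_apply_eq_zero_of_col_eq_zero hB, zero_add] at h
  exact (mul_eq_zero.mp h).resolve_left hmu

theorem mul_add_smul_eq_zero_of_forall_col_ne_zero
    (hC : ∀ j, Cᵀ j ≠ 0 → ∀ i, (A * B) i j + mu * C i j = 0)
    (hBC : ∀ j, Cᵀ j = 0 → Bᵀ j = 0) :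
    A * B + mu • C = 0 := by
  ext i j
  by_cases hCj : Cᵀ j = 0
  · simp [mul_apply_eq_zero_of_col_eq_zero (hBC j hCj), show C i j = 0 from congrFun hCj i]
  · simpa using hC j hCj i

end Matrix

theorem critical_iff_gradient_vanishes_general {n m r : ℕ}
    (f' : Matrix (Fin n) (Fin m) ℝ → Matrix (Fin n) (Fin m) ℝ)
    (mu : ℝ) (hmu : 0 < mu)
    (Ubar : Matrix (Fin n) (Fin r) ℝ) (Vbar : Matrix (Fin m) (Fin r) ℝ) :
    ((∀ j : Fin r, (fun i => Ubar i j) ≠ 0 →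
        ∀ i, (f' (Ubar * Vbarᵀ) * Vbar) i j + mu * Ubar i j = 0) ∧
      (∀ j : Fin r, (fun i => Vbar i j) ≠ 0 →
        ∀ i, ((f' (Ubar * Vbarᵀ))ᵀ * Ubar) i j + mu * Vbar i j = 0)) ↔
      (f' (Ubar * Vbarᵀ) * Vbar + mu • Ubar = 0 ∧
        (f' (Ubar * Vbarᵀ))ᵀ * Ubar + mu • Vbar = 0) := by
  constructor
  · rintro ⟨hU, hV⟩
    exact ⟨mul_add_smul_eq_zero_of_forall_col_ne_zero hU fun _ =>
        col_eq_zero_of_col_eq_zero_of_mul_add_mul_eq_zero hmu.ne' hV,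
      mul_add_smul_eq_zero_of_forall_col_ne_zero hV fun _ =>
        col_eq_zero_of_col_eq_zero_of_mul_add_mul_eq_zero hmu.ne' hU⟩
  · rintro ⟨hU, hV⟩
    exact ⟨fun j _ i => by simpa using congrFun (congrFun hU i) j,
      fun j _ i => by simpa using congrFun (congrFun hV i) j⟩

/-- the columnwise criticality conditions of `Φ_{λ,μ}` at `(Ū,V̄)` hold
if and only if the full gradient of `F_μ(U,V) = f(UVᵀ) + (μ/2)(‖U‖_F² + ‖V‖_F²)`
vanishes at `(Ū,V̄)`, i.e. `∇f(ŪV̄ᵀ)V̄ + μŪ = 0` and `(∇f(ŪV̄ᵀ))ᵀŪ + μV̄ = 0`. -/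
theorem critical_iff_gradient_vanishes {n m r : ℕ}
    (f : Matrix (Fin n) (Fin m) ℝ → ℝ) (f' : Matrix (Fin n) (Fin m) ℝ → Matrix (Fin n) (Fin m) ℝ)
    (hdiff : Differentiable ℝ f)
    (hgrad : ∀ X H, fderiv ℝ f X H = frobInner (f' X) H)
    (hcont : Continuous f')
    (mu : ℝ) (hmu : 0 < mu)
    (Ubar : Matrix (Fin n) (Fin r) ℝ) (Vbar : Matrix (Fin m) (Fin r) ℝ) :
    ((∀ j : Fin r, (fun i => Ubar i j) ≠ 0 →
        ∀ i, (f' (Ubar * Vbarᵀ) * Vbar) i j + mu * Ubar i j = 0) ∧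
      (∀ j : Fin r, (fun i => Vbar i j) ≠ 0 →
        ∀ i, ((f' (Ubar * Vbarᵀ))ᵀ * Ubar) i j + mu * Vbar i j = 0)) ↔
      (f' (Ubar * Vbarᵀ) * Vbar + mu • Ubar = 0 ∧
        (f' (Ubar * Vbarᵀ))ᵀ * Ubar + mu • Vbar = 0) :=
  critical_iff_gradient_vanishes_general f' mu hmu Ubar Vbar
end

section
/- Let f : ℝ^{n×m} → ℝ be differentiable with ∇f Lipschitz continuous with modulus L_f (Frobenius norm), λ > 0, μ ≥ 0. Let U^k, Ũ^k ∈ ℝ^{n×r} and V^k, Ṽ^k ∈ ℝ^{m×r}. Set τ₁ = L_f‖V^k‖² and γ₁ > τ₁, and let U^{k+1} globally minimize U ↦ ⟨∇f(Ũ^k(V^k)ᵀ)V^k, U⟩ + (γ₁/2)‖U − Ũ^k‖_F² + (μ/2)‖U‖_F² + λ‖U‖_{2,0}. Set τ₂ = L_f‖U^{k+1}‖² and γ₂ > τ₂, and let V^{k+1} globally minimize V ↦ ⟨(∇f(U^{k+1}(Ṽ^k)ᵀ))ᵀU^{k+1}, V⟩ + (γ₂/2)‖V − Ṽ^k‖_F²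 + (μ/2)‖V‖_F² + λ‖V‖_{2,0}. Then Φ_{λ,μ}(U^{k+1}, V^{k+1}) ≤ Φ_{λ,μ}(U^k, V^k) + ((γ₁ + τ₁)/2)‖U^k − Ũ^k‖_F² + ((γ₂ + τ₂)/2)‖V^k − Ṽ^k‖_F² − ((γ₁ − τ₁)/2)‖U^{k+1} − Ũ^k‖_F² − ((γ₂ − τ₂)/2)‖V^{k+1} − Ṽ^k‖_F². -/
open Filter Topology Matrix

attribute [local instance] Matrix.frobeniusSeminormedAddCommGroup
  Matrix.frobeniusNormedAddCommGroup Matrix.frobeniusNormedSpace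

/-- The Frobenius norm of a matrix. -/
noncomputable def frobNorm {α β : Type*} [Fintype α] [Fintype β] (A : Matrix α β ℝ) : ℝ :=
  Real.sqrt (frobInner A A)

/-- The spectral norm of a matrix. -/
noncomputable def specNorm {m r : ℕ} (V : Matrix (Fin m) (Fin r) ℝ) : ℝ :=
  ‖LinearMap.toContinuousLinearMap (Matrix.toEuclideanLin V)‖

/-- `Φ_{λ,μ}(U,V) = f(UVᵀ) + (μ/2)(‖U‖_F² + ‖V‖_F²) + λ(‖U‖_{2,0} + ‖V‖_{2,0})`. -/
noncomputable def Phi {n m r : ℕ} (f : Matrix (Fin n) (Fin m) ℝ → ℝ) (lam mu : ℝ)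
    (U : Matrix (Fin n) (Fin r) ℝ) (V : Matrix (Fin m) (Fin r) ℝ) : ℝ :=
  f (U * Vᵀ) + mu / 2 * (frobInner U U + frobInner V V) + lam * ((l20 U : ℝ) + (l20 V : ℝ))


/-!
Each block update is a proximal step on a majorant of `f`. By the descent lemma for a gradient
that is `L_f`-Lipschitz, `U ↦ f(UVᵀ)` differs from its linearization at `Ũ` by at most
`(L_f‖V‖²/2)‖U − Ũ‖_F²`, since `‖(U − Ũ)Vᵀ‖_F ≤ ‖U − Ũ‖_F ‖V‖`. The upper bound at `U^{k+1}`,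
the minimality of `U^{k+1}` tested against `U^k`, and the lower bound at `U^k` compare the
`U`-step; the same three facts for `V ↦ f(U^{k+1}Vᵀ)` compare the `V`-step, and adding the two
gives the estimate.
-/

theorem abs_sub_sub_fderiv_le {E : Type*} [NormedAddCommGroup E] [NormedSpace ℝ E]
    {f : E → ℝ} {L : ℝ} (hf : Differentiable ℝ f)
    (hL : ∀ x y v, |fderiv ℝ f x v - fderiv ℝ f y v| ≤ L * ‖x - y‖ * ‖v‖) (x y : E) :
    |f y - f x - fderiv ℝ f x (y - x)| ≤ L / 2 * ‖y - x‖ ^ 2 := by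
  set d := y - x
  have hg : ∀ t : ℝ, HasDerivAt (fun t : ℝ => f (x + t • d) - f x - t * fderiv ℝ f x d)
      (fderiv ℝ f (x + t • d) d - fderiv ℝ f x d) t := by
    intro t
    have hline : HasDerivAt (fun t : ℝ => x + t • d) d t := by
      simpa using ((hasDerivAt_id t).smul_const d).const_add x
    have h := (((hf _).hasFDerivAt.comp_hasDerivAt t hline).sub_const (f x)).sub
      ((hasDerivAt_id' t).mul_const (fderiv ℝ f x d))
    rwa [one_mul] at h
  have hB : ∀ t : ℝ, HasDerivAt (fun t : ℝ => L / 2 * ‖d‖ ^ 2 * t ^ 2) (L * ‖d‖ ^ 2 * t) t := by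
    intro t
    exact ((hasDerivAt_pow 2 t).const_mul _).congr_deriv (by norm_num; ring)
  have hbound : ∀ t ∈ Set.Ico (0 : ℝ) 1,
      ‖fderiv ℝ f (x + t • d) d - fderiv ℝ f x d‖ ≤ L * ‖d‖ ^ 2 * t := by
    rintro t ⟨ht, -⟩
    calc ‖fderiv ℝ f (x + t • d) d - fderiv ℝ f x d‖ ≤ L * ‖(x + t • d) - x‖ * ‖d‖ := hL _ _ _
      _ = L * ‖d‖ ^ 2 * t := by
        rw [add_sub_cancel_left, norm_smul, Real.norm_of_nonneg ht]; ring
  have := image_norm_le_of_norm_deriv_right_le_deriv_boundary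
    (fun t _ => (hg t).continuousAt.continuousWithinAt) (fun t _ => (hg t).hasDerivWithinAt)
    (by simp) hB hbound (Set.right_mem_Icc.mpr zero_le_one)
  simpa [d] using this

section Frobenius

variable {α β : Type*} [Fintype α] [Fintype β]

theorem frobenius_norm_eq_sqrt (A : Matrix α β ℝ) : ‖A‖ = √(∑ i, ∑ j, A i j ^ 2) := by
  simp [Matrix.frobenius_norm_def, Real.sqrt_eq_rpow]

theorem frobInner_self (A : Matrix α β ℝ) : frobInner A A = ‖A‖ ^ 2 := by
  rw [frobenius_norm_eq_sqrt, Real.sq_sqrt (by positivity)]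
  simp [frobInner, sq]

theorem frobNorm_eq_norm (A : Matrix α β ℝ) : frobNorm A = ‖A‖ := by
  rw [frobNorm, frobInner_self, Real.sqrt_sq (norm_nonneg _)]

theorem frobInner_le_norm_mul_norm (A B : Matrix α β ℝ) : frobInner A B ≤ ‖A‖ * ‖B‖ := by
  simp only [frobInner, frobenius_norm_eq_sqrt, ← Fintype.sum_prod_type']
  exact Real.sum_mul_le_sqrt_mul_sqrt _ _ _

theorem frobInner_neg_left (A B : Matrix α β ℝ) : frobInner (-A) B = -frobInner A B := by
  simp [frobInner]

theorem abs_frobInner_le (A B : Matrix α β ℝ) : |frobInner A B| ≤ ‖A‖ * ‖B‖ := by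
  refine abs_le.mpr ⟨?_, frobInner_le_norm_mul_norm A B⟩
  have := frobInner_le_norm_mul_norm (-A) B
  rw [frobInner_neg_left, norm_neg] at this
  linarith

theorem frobInner_sub_left (A B C : Matrix α β ℝ) :
    frobInner (A - B) C = frobInner A C - frobInner B C := by
  simp [frobInner, sub_mul]

theorem frobInner_sub_right (A B C : Matrix α β ℝ) :
    frobInner A (B - C) = frobInner A B - frobInner A C := by
  simp [frobInner, mul_sub]

theorem frobInner_transpose (A B : Matrix α β ℝ) : frobInner Aᵀ Bᵀ = frobInner A B :=
  Finset.sum_comm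

theorem frobInner_mul_transpose {γ : Type*} [Fintype γ] (A : Matrix α β ℝ)
    (U : Matrix α γ ℝ) (V : Matrix β γ ℝ) : frobInner A (U * Vᵀ) = frobInner (A * V) U := by
  simp only [frobInner, Matrix.mul_apply, Matrix.transpose_apply, Finset.mul_sum, Finset.sum_mul]
  refine Finset.sum_congr rfl fun i _ => Finset.sum_comm.trans ?_
  exact Finset.sum_congr rfl fun k _ => Finset.sum_congr rfl fun j _ => by ring

theorem frobInner_mul_transpose' {γ : Type*} [Fintype γ] (A : Matrix α β ℝ)
    (U : Matrix α γ ℝ) (V : Matrix β γ ℝ) : frobInner A (U * Vᵀ) = frobInner (Aᵀ * U) V := by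
  rw [← frobInner_transpose, Matrix.transpose_mul, Matrix.transpose_transpose,
    frobInner_mul_transpose]

theorem abs_sub_sub_frobInner_le {f : Matrix α β ℝ → ℝ} {f' : Matrix α β ℝ → Matrix α β ℝ}
    {L : ℝ} (hdiff : Differentiable ℝ f) (hgrad : ∀ X H, fderiv ℝ f X H = frobInner (f' X) H)
    (hlip : ∀ X Y, ‖f' X - f' Y‖ ≤ L * ‖X - Y‖) (X Y : Matrix α β ℝ) :
    |f Y - f X - frobInner (f' X) (Y - X)| ≤ L / 2 * ‖Y - X‖ ^ 2 := by
  rw [← hgrad]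
  refine abs_sub_sub_fderiv_le hdiff (fun X Y H => ?_) X Y
  calc |fderiv ℝ f X H - fderiv ℝ f Y H| = |frobInner (f' X - f' Y) H| := by
        rw [frobInner_sub_left, ← hgrad, ← hgrad]
    _ ≤ ‖f' X - f' Y‖ * ‖H‖ := abs_frobInner_le _ _
    _ ≤ L * ‖X - Y‖ * ‖H‖ := by gcongr; exact hlip X Y

end Frobenius

theorem specNorm_of_fin_zero {r : ℕ} (V : Matrix (Fin 0) (Fin r) ℝ) : specNorm V = 0 := by
  rw [specNorm, Subsingleton.elim (LinearMap.toContinuousLinearMap _) 0, norm_zero]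

theorem norm_mul_transpose_le {n m r : ℕ} (A : Matrix (Fin n) (Fin r) ℝ)
    (V : Matrix (Fin m) (Fin r) ℝ) : ‖A * Vᵀ‖ ≤ ‖A‖ * specNorm V := by
  have hrow : ∀ i, ∑ j, (A * Vᵀ) i j ^ 2 ≤ specNorm V ^ 2 * ∑ k, A i k ^ 2 := by
    intro i
    have h := (LinearMap.toContinuousLinearMap (Matrix.toEuclideanLin V)).le_opNorm
      (WithLp.toLp 2 (A i))
    have h2 := pow_le_pow_left₀ (norm_nonneg _) h 2
    rw [mul_pow, EuclideanSpace.real_norm_sq_eq, EuclideanSpace.real_norm_sq_eq] at h2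
    simpa [Matrix.mul_apply, Matrix.mulVec, dotProduct, mul_comm, specNorm] using h2
  rw [frobenius_norm_eq_sqrt, frobenius_norm_eq_sqrt,
    ← Real.sqrt_sq (show 0 ≤ specNorm V from norm_nonneg _), ← Real.sqrt_mul (by positivity)]
  refine Real.sqrt_le_sqrt ((Finset.sum_le_sum fun i _ => hrow i).trans_eq ?_)
  rw [Finset.sum_mul]
  exact Finset.sum_congr rfl fun i _ => mul_comm _ _

theorem nonneg_of_norm_sub_le_mul_norm_sub {E F : Type*} [NormedAddCommGroup E] [Nontrivial E]
    [SeminormedAddCommGroup F] {g : E → F} {L : ℝ} (h : ∀ x y, ‖g x - g y‖ ≤ L * ‖x - y‖) :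
    0 ≤ L := by
  obtain ⟨x, hx⟩ := exists_ne (0 : E)
  have := (norm_nonneg _).trans (h x 0)
  rw [sub_zero] at this
  exact (mul_nonneg_iff_of_pos_right (norm_pos_iff.mpr hx)).mp this

section BlockDescent

variable {n m r : ℕ} {f : Matrix (Fin n) (Fin m) ℝ → ℝ}
  {f' : Matrix (Fin n) (Fin m) ℝ → Matrix (Fin n) (Fin m) ℝ} {Lf : ℝ}
  (hdiff : Differentiable ℝ f) (hgrad : ∀ X H, fderiv ℝ f X H = frobInner (f' X) H)
  (hlip : ∀ X Y, ‖f' X - f' Y‖ ≤ Lf * ‖X - Y‖)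
include hdiff hgrad hlip

theorem abs_sub_sub_frobInner_le_left (V : Matrix (Fin m) (Fin r) ℝ)
    (U₀ U : Matrix (Fin n) (Fin r) ℝ) :
    |f (U * Vᵀ) - f (U₀ * Vᵀ) - frobInner (f' (U₀ * Vᵀ) * V) (U - U₀)| ≤
      Lf * specNorm V ^ 2 / 2 * frobInner (U - U₀) (U - U₀) := by
  have h := abs_sub_sub_frobInner_le hdiff hgrad hlip (U₀ * Vᵀ) (U * Vᵀ)
  rw [← Matrix.sub_mul, frobInner_mul_transpose] at h
  refine h.trans ?_
  rw [frobInner_self]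
  -- `Lf < 0` is only possible when `Matrix (Fin n) (Fin m) ℝ` is trivial.
  rcases Nat.eq_zero_or_pos n with rfl | hn
  · simp [Subsingleton.elim (U - U₀) 0]
  rcases Nat.eq_zero_or_pos m with rfl | hm
  · rw [Subsingleton.elim ((U - U₀) * Vᵀ) 0, specNorm_of_fin_zero]
    simp
  have : NeZero n := ⟨hn.ne'⟩
  have : NeZero m := ⟨hm.ne'⟩
  have hLf := nonneg_of_norm_sub_le_mul_norm_sub hlip
  calc Lf / 2 * ‖(U - U₀) * Vᵀ‖ ^ 2 ≤ Lf / 2 * (‖U - U₀‖ * specNorm V) ^ 2 := by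
        gcongr; exact norm_mul_transpose_le _ _
    _ = Lf * specNorm V ^ 2 / 2 * ‖U - U₀‖ ^ 2 := by ring

theorem abs_sub_sub_frobInner_le_right (U : Matrix (Fin n) (Fin r) ℝ)
    (V₀ V : Matrix (Fin m) (Fin r) ℝ) :
    |f (U * Vᵀ) - f (U * V₀ᵀ) - frobInner ((f' (U * V₀ᵀ))ᵀ * U) (V - V₀)| ≤
      Lf * specNorm U ^ 2 / 2 * frobInner (V - V₀) (V - V₀) := by
  have h := abs_sub_sub_frobInner_le hdiff hgrad hlip (U * V₀ᵀ) (U * Vᵀ)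
  rw [← Matrix.mul_sub, ← Matrix.transpose_sub, frobInner_mul_transpose'] at h
  refine h.trans ?_
  rw [frobInner_self, ← Matrix.frobenius_norm_transpose, Matrix.transpose_mul,
    Matrix.transpose_transpose]
  rcases Nat.eq_zero_or_pos n with rfl | hn
  · rw [Subsingleton.elim ((V - V₀) * Uᵀ) 0, specNorm_of_fin_zero]
    simp
  rcases Nat.eq_zero_or_pos m with rfl | hm
  · simp [Subsingleton.elim (V - V₀) 0]
  have : NeZero n := ⟨hn.ne'⟩
  have : NeZero m := ⟨hm.ne'⟩
  have hLf := nonneg_of_norm_sub_le_mul_norm_sub hlip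
  calc Lf / 2 * ‖(V - V₀) * Uᵀ‖ ^ 2 ≤ Lf / 2 * (‖V - V₀‖ * specNorm U) ^ 2 := by
        gcongr; exact norm_mul_transpose_le _ _
    _ = Lf * specNorm U ^ 2 / 2 * ‖V - V₀‖ ^ 2 := by ring

end BlockDescent

theorem amm_two_block_descent_general {n m r : ℕ}
    (f : Matrix (Fin n) (Fin m) ℝ → ℝ) (f' : Matrix (Fin n) (Fin m) ℝ → Matrix (Fin n) (Fin m) ℝ)
    (Lf : ℝ)
    (hdiff : Differentiable ℝ f)
    (hgrad : ∀ X H, fderiv ℝ f X H = frobInner (f' X) H)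
    (hlip : ∀ X Y, frobNorm (f' X - f' Y) ≤ Lf * frobNorm (X - Y))
    (lam mu : ℝ)
    (Uk Utk Uk1 : Matrix (Fin n) (Fin r) ℝ) (Vk Vtk Vk1 : Matrix (Fin m) (Fin r) ℝ)
    (τ1 γ1 : ℝ) (hτ1 : τ1 = Lf * specNorm Vk ^ 2)
    (hU : ∀ U : Matrix (Fin n) (Fin r) ℝ,
      frobInner (f' (Utk * Vkᵀ) * Vk) Uk1 + γ1 / 2 * frobInner (Uk1 - Utk) (Uk1 - Utk) +
          mu / 2 * frobInner Uk1 Uk1 + lam * (l20 Uk1 : ℝ) ≤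
        frobInner (f' (Utk * Vkᵀ) * Vk) U + γ1 / 2 * frobInner (U - Utk) (U - Utk) +
          mu / 2 * frobInner U U + lam * (l20 U : ℝ))
    (τ2 γ2 : ℝ) (hτ2 : τ2 = Lf * specNorm Uk1 ^ 2)
    (hV : ∀ V : Matrix (Fin m) (Fin r) ℝ,
      frobInner ((f' (Uk1 * Vtkᵀ))ᵀ * Uk1) Vk1 + γ2 / 2 * frobInner (Vk1 - Vtk) (Vk1 - Vtk) +
          mu / 2 * frobInner Vk1 Vk1 + lam * (l20 Vk1 : ℝ) ≤
        frobInner ((f' (Uk1 * Vtkᵀ))ᵀ * Uk1) V + γ2 / 2 * frobInner (V - Vtk) (V - Vtk) +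
          mu / 2 * frobInner V V + lam * (l20 V : ℝ)) :
    Phi f lam mu Uk1 Vk1 ≤
      Phi f lam mu Uk Vk + (γ1 + τ1) / 2 * frobInner (Uk - Utk) (Uk - Utk) +
        (γ2 + τ2) / 2 * frobInner (Vk - Vtk) (Vk - Vtk) -
        (γ1 - τ1) / 2 * frobInner (Uk1 - Utk) (Uk1 - Utk) -
        (γ2 - τ2) / 2 * frobInner (Vk1 - Vtk) (Vk1 - Vtk) := by
  simp only [frobNorm_eq_norm] at hlip
  subst hτ1 hτ2
  have hU1 := (abs_le.mp (abs_sub_sub_frobInner_le_left hdiff hgrad hlip Vk Utk Uk1)).2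
  have hUk := (abs_le.mp (abs_sub_sub_frobInner_le_left hdiff hgrad hlip Vk Utk Uk)).1
  have hV1 := (abs_le.mp (abs_sub_sub_frobInner_le_right hdiff hgrad hlip Uk1 Vtk Vk1)).2
  have hVk := (abs_le.mp (abs_sub_sub_frobInner_le_right hdiff hgrad hlip Uk1 Vtk Vk)).1
  set G₁ := f' (Utk * Vkᵀ) * Vk
  set G₂ := (f' (Uk1 * Vtkᵀ))ᵀ * Uk1
  simp only [frobInner_sub_right G₁, frobInner_sub_right G₂] at hU1 hUk hV1 hVk
  unfold Phi
  linarith [hU Uk, hV Vk]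

/-- one full alternating majorization step decreases `Φ_{λ,μ}` up to the
stated proximal correction terms. -/
theorem amm_two_block_descent {n m r : ℕ}
    (f : Matrix (Fin n) (Fin m) ℝ → ℝ) (f' : Matrix (Fin n) (Fin m) ℝ → Matrix (Fin n) (Fin m) ℝ)
    (Lf : ℝ)
    (hdiff : Differentiable ℝ f)
    (hgrad : ∀ X H, fderiv ℝ f X H = frobInner (f' X) H)
    (hlip : ∀ X Y, frobNorm (f' X - f' Y) ≤ Lf * frobNorm (X - Y))
    (lam mu : ℝ) (hlam : 0 < lam) (hmu : 0 ≤ mu)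
    (Uk Utk Uk1 : Matrix (Fin n) (Fin r) ℝ) (Vk Vtk Vk1 : Matrix (Fin m) (Fin r) ℝ)
    (τ1 γ1 : ℝ) (hτ1 : τ1 = Lf * specNorm Vk ^ 2) (hγ1 : γ1 > τ1)
    (hU : ∀ U : Matrix (Fin n) (Fin r) ℝ,
      frobInner (f' (Utk * Vkᵀ) * Vk) Uk1 + γ1 / 2 * frobInner (Uk1 - Utk) (Uk1 - Utk) +
          mu / 2 * frobInner Uk1 Uk1 + lam * (l20 Uk1 : ℝ) ≤
        frobInner (f' (Utk * Vkᵀ) * Vk) U + γ1 / 2 * frobInner (U - Utk) (U - Utk) +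
          mu / 2 * frobInner U U + lam * (l20 U : ℝ))
    (τ2 γ2 : ℝ) (hτ2 : τ2 = Lf * specNorm Uk1 ^ 2) (hγ2 : γ2 > τ2)
    (hV : ∀ V : Matrix (Fin m) (Fin r) ℝ,
      frobInner ((f' (Uk1 * Vtkᵀ))ᵀ * Uk1) Vk1 + γ2 / 2 * frobInner (Vk1 - Vtk) (Vk1 - Vtk) +
          mu / 2 * frobInner Vk1 Vk1 + lam * (l20 Vk1 : ℝ) ≤
        frobInner ((f' (Uk1 * Vtkᵀ))ᵀ * Uk1) V + γ2 / 2 * frobInner (V - Vtk) (V - Vtk) +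
          mu / 2 * frobInner V V + lam * (l20 V : ℝ)) :
    Phi f lam mu Uk1 Vk1 ≤
      Phi f lam mu Uk Vk + (γ1 + τ1) / 2 * frobInner (Uk - Utk) (Uk - Utk) +
        (γ2 + τ2) / 2 * frobInner (Vk - Vtk) (Vk - Vtk) -
        (γ1 - τ1) / 2 * frobInner (Uk1 - Utk) (Uk1 - Utk) -
        (γ2 - τ2) / 2 * frobInner (Vk1 - Vtk) (Vk1 - Vtk) :=
  amm_two_block_descent_general f f' Lf hdiff hgrad hlip lam mu Uk Utk Uk1 Vk Vtk Vk1 τ1 γ1 hτ1 hU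
    τ2 γ2 hτ2 hV
end
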